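/- Let L be a quasi-local multiplicative lattice (finitely many maximal elements, 1 compact) in which every prime element is a z-element. Then every prime element of L is maximal. -/

import Mathlib

/-!
A prime `p` that is a z-element is the meet of the maximal elements above it. In the
quasi-local case these are finitely many, so their product lies below that meet and hence
below `p`; primality puts one of them, `m`, below `p` (an empty product would be `1 = ⊤`),
and `p ≤ m` forces `p = m`.
-/

/-- A multiplicative lattice: a complete lattice with an associative, commutative
multiplication distributing over arbitrary joins, with the top element as unit. -/
class MultiplicativeLattice (L : Type*) extends CompleteLattice L, CommMonoid L where
  mul_sSup : ∀ (a : L) (s : Set L), a * sSup s = ⨆ b ∈ s, a * b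
  one_eq_top : (1 : L) = ⊤

variable {L : Type*} [MultiplicativeLattice L]

/-- A maximal element: proper, and anything properly above it up to (but not) ⊤ equals it. -/
def IsMaxElt (m : L) : Prop := m ≠ ⊤ ∧ ∀ x : L, m ≤ x → x ≠ ⊤ → m = x

/-- The set of maximal elements above `a`. -/
def MSet (a : L) : Set L := {m | IsMaxElt m ∧ a ≤ m}

/-- A z-element: `M_a ⊇ M_b` and `b ≤ x` imply `a ≤ x`. -/
def IsZ (x : L) : Prop := ∀ a b : L, MSet b ⊆ MSet a → b ≤ x → a ≤ x

/-- The top element 1 = ⊤ is compact. -/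
def OneCompact (L : Type*) [MultiplicativeLattice L] : Prop :=
  ∀ s : Set L, sSup s = ⊤ → ∃ t : Finset L, ↑t ⊆ s ∧ t.sup id = ⊤

/-- The z-closure of an element: meet of all z-elements above it. -/
noncomputable def zCl (a : L) : L := sInf {z : L | IsZ z ∧ a ≤ z}

/-- A prime element: proper and `x*y ≤ p` implies `x ≤ p` or `y ≤ p`. -/
def IsPrimeElt (p : L) : Prop := p ≠ ⊤ ∧ ∀ x y : L, x * y ≤ p → x ≤ p ∨ y ≤ p

namespace MultiplicativeLattice

theorem mul_sup (a b c : L) : a * (b ⊔ c) = a * b ⊔ a * c := by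
  rw [← sSup_pair, mul_sSup, iSup_pair]

theorem mul_top (a : L) : a * ⊤ = a := by
  rw [← one_eq_top, mul_one]

theorem mul_le_left (a b : L) : a * b ≤ a :=
  calc a * b ≤ a * b ⊔ a * ⊤ := le_sup_left
    _ = a := by rw [← mul_sup, sup_top_eq, mul_top]

theorem prod_le_of_mem {ι : Type*} {s : Finset ι} (f : ι → L) {i : ι} (hi : i ∈ s) :
    ∏ j ∈ s, f j ≤ f i := by
  classical
  rw [← Finset.mul_prod_erase s f hi]
  exact mul_le_left _ _

end MultiplicativeLattice

open MultiplicativeLattice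

theorem IsPrimeElt.exists_le_of_prod_le {p : L} (hp : IsPrimeElt p) {ι : Type*}
    (s : Finset ι) (f : ι → L) (hs : ∏ i ∈ s, f i ≤ p) : ∃ i ∈ s, f i ≤ p := by
  classical
  induction s using Finset.induction_on with
  | empty =>
    rw [Finset.prod_empty, one_eq_top, top_le_iff] at hs
    exact absurd hs hp.1
  | insert a s ha ih =>
    rw [Finset.prod_insert ha] at hs
    rcases hp.2 _ _ hs with hap | hsp
    · exact ⟨a, Finset.mem_insert_self a s, hap⟩
    · obtain ⟨i, hi, hip⟩ := ih hsp
      exact ⟨i, Finset.mem_insert_of_mem hi, hip⟩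

theorem IsZ.sInf_mSet_le {x : L} (hx : IsZ x) : sInf (MSet x) ≤ x :=
  hx _ x (fun _ hm => ⟨hm.1, sInf_le hm⟩) le_rfl

theorem IsPrimeElt.isMaxElt_of_isZ {p : L} (hp : IsPrimeElt p) (hz : IsZ p)
    (hfin : (MSet p).Finite) : IsMaxElt p := by
  have hprod : ∏ m ∈ hfin.toFinset, m ≤ p :=
    le_trans (le_sInf fun m hm => prod_le_of_mem id (hfin.mem_toFinset.2 hm)) hz.sInf_mSet_le
  obtain ⟨m, hm, hmp⟩ := hp.exists_le_of_prod_le _ id hprod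
  obtain ⟨hmax, hpm⟩ := hfin.mem_toFinset.1 hm
  exact le_antisymm hpm hmp ▸ hmax

theorem stmt11_general (hfin : {m : L | IsMaxElt m}.Finite)
    (hpz : ∀ p : L, IsPrimeElt p → IsZ p)
    (p : L) (hp : IsPrimeElt p) : IsMaxElt p :=
  hp.isMaxElt_of_isZ (hpz p hp) (hfin.subset fun _ hm => hm.1)

theorem stmt11 (h : OneCompact L)
    (hfin : {m : L | IsMaxElt m}.Finite) (hne : {m : L | IsMaxElt m}.Nonempty)
    (hpz : ∀ p : L, IsPrimeElt p → IsZ p)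
    (p : L) (hp : IsPrimeElt p) : IsMaxElt p :=
  stmt11_general hfin hpz p hp
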